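/- Let G be a weak framework for a matroid M. If H is a subgraph of G with |E(H)| > |V(H)|, then E(H) is a dependent set of M. -/

import Mathlib

/-!
If `E(H)` were independent, then `|E(H)| = r(E(H)) ≤ r(E(G[V(H)]))`, so it suffices to show
`r(E(G[W])) ≤ |W|` for every vertex set `W`. No edge joins two components, so by
subadditivity of the rank we may take `W` inside one component `C`, and induct on
`|V(C) \ W|`. For `W = V(C)` this is condition (2). Otherwise some edge `ab` of `C` leaves `W`
at `b`; condition (3) at `b` shows that `ab` is not spanned by `E(G[W]) ⊆ E(G - b)`, so adding
`b` to `W` raises `r(E(G[W]))` by at least one while `|W|` grows by exactly one.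
-/

open Set Matroid
open scoped Classical

namespace QuasiGraphicPaper

universe u v

/-- A finite multigraph: a set `V` of vertices (in an ambient type `α`), a set `E` of
edges (in an ambient type `β`), and an incidence function assigning to each edge an
unordered pair of endpoints; loop-edges and parallel edges are allowed. -/
structure Graph (α : Type u) (β : Type v) where
  V : Set α
  E : Set β
  ends : β → Sym2 α
  finV : V.Finite
  finE : E.Finite
  ends_mem : ∀ ⦃e⦄, e ∈ E → ∀ ⦃x⦄, x ∈ ends e → x ∈ V

namespace Graph

variable {α : Type u} {β : Type v}

/-- `e` is a loop-edge of `G` at the vertex `v`. -/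
def IsLoopAt (G : Graph α β) (e : β) (v : α) : Prop :=
  e ∈ G.E ∧ G.ends e = Sym2.diag v

/-- `loops_G(v)`: the set of loop-edges of `G` at `v`. -/
def loopsAt (G : Graph α β) (v : α) : Set β := {e | G.IsLoopAt e v}

/-- Two vertices are adjacent if some edge of `G` has them as its two endpoints. -/
def Adj (G : Graph α β) (u v : α) : Prop := ∃ e ∈ G.E, G.ends e = s(u, v)

/-- A graph is connected if any two of its vertices are joined by a walk.
(The graph with no vertices is connected.) -/
def Connected (G : Graph α β) : Prop :=
  ∀ u ∈ G.V, ∀ v ∈ G.V, Relation.ReflTransGen G.Adj u v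

/-- Delete a set `X` of vertices: remove the vertices in `X` and all edges meeting `X`. -/
def deleteVertices (G : Graph α β) (X : Set α) : Graph α β where
  V := G.V \ X
  E := {e ∈ G.E | ∀ x ∈ G.ends e, x ∉ X}
  ends := G.ends
  finV := G.finV.diff
  finE := G.finE.subset (sep_subset _ _)
  ends_mem := fun e he x hx => ⟨G.ends_mem he.1 hx, he.2 x hx⟩

/-- `G − v`: delete the single vertex `v`. -/
abbrev deleteVertex (G : Graph α β) (v : α) : Graph α β := G.deleteVertices {v}

/-- `G − e`: delete the edge `e` (keeping all vertices). -/
def deleteEdge (G : Graph α β) (e : β) : Graph α β where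
  V := G.V
  E := G.E \ {e}
  ends := G.ends
  finV := G.finV
  finE := G.finE.diff
  ends_mem := fun f hf x hx => G.ends_mem hf.1 hx

/-- `G[X]`: the subgraph of `G` with edge set `X` (intersected with `E(G)`) and
no isolated vertices. -/
def restrictEdges (G : Graph α β) (X : Set β) : Graph α β where
  V := {v | ∃ e ∈ X ∩ G.E, v ∈ G.ends e}
  E := X ∩ G.E
  ends := G.ends
  finV := G.finV.subset (by rintro v ⟨e, ⟨-, he⟩, hv⟩; exact G.ends_mem he hv)
  finE := G.finE.subset inter_subset_right
  ends_mem := fun e he x hx => ⟨e, he, hx⟩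

/-- The connected component of `G` containing the vertex `v`, as a graph. -/
def componentOf (G : Graph α β) (v : α) : Graph α β where
  V := {u ∈ G.V | Relation.ReflTransGen G.Adj v u}
  E := {e ∈ G.E | ∀ x ∈ G.ends e, Relation.ReflTransGen G.Adj v x}
  ends := G.ends
  finV := G.finV.subset (sep_subset _ _)
  finE := G.finE.subset (sep_subset _ _)
  ends_mem := fun e he x hx => ⟨G.ends_mem he.1 hx, he.2 x hx⟩

/-- `H` is a connected component of `G`. -/
def IsComponentOf (H G : Graph α β) : Prop := ∃ v ∈ G.V, H = G.componentOf v

/-- The number of connected components of `G`. -/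
noncomputable def ncomponents (G : Graph α β) : ℕ :=
  {H : Graph α β | H.IsComponentOf G}.ncard

/-- `G` has at most two connected components: among any three vertices, two are joined. -/
def AtMostTwoComponents (G : Graph α β) : Prop :=
  ∀ u ∈ G.V, ∀ v ∈ G.V, ∀ w ∈ G.V,
    Relation.ReflTransGen G.Adj u v ∨ Relation.ReflTransGen G.Adj u w ∨
      Relation.ReflTransGen G.Adj v w

/-- The degree of a vertex: loop-edges count twice. -/
noncomputable def degree (G : Graph α β) (v : α) : ℕ :=
  ({e ∈ G.E | v ∈ G.ends e ∧ ¬ (G.ends e).IsDiag}).ncard +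
    2 * ({e ∈ G.E | G.ends e = Sym2.diag v}).ncard

/-- `G` is a cycle: it is connected, has at least one edge, and every vertex has
degree two. -/
def IsCycleGraph (G : Graph α β) : Prop :=
  G.E.Nonempty ∧ G.Connected ∧ ∀ v ∈ G.V, G.degree v = 2

/-- `C` is (the edge set of) a cycle of `G`. -/
def CycleSet (G : Graph α β) (C : Set β) : Prop :=
  C ⊆ G.E ∧ (G.restrictEdges C).IsCycleGraph

/-- A forest: a graph with no cycles (in particular no loop-edges). -/
def IsForest (G : Graph α β) : Prop := ∀ C, ¬ G.CycleSet C

/-- `H` is a subgraph of `G`. -/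
def IsSubgraph (H G : Graph α β) : Prop := H.V ⊆ G.V ∧ H.E ⊆ G.E ∧ H.ends = G.ends

/-- `G` is `k`-connected if `G − X` is connected for every vertex set `X` with `|X| < k`. -/
def KConnected (G : Graph α β) (k : ℕ) : Prop :=
  ∀ X : Set α, X.encard < k → (G.deleteVertices X).Connected

/-- A theta: a `2`-connected graph with exactly two vertices of degree three, all
other vertices having degree two. -/
def IsTheta (H : Graph α β) : Prop :=
  H.KConnected 2 ∧
    ∃ a ∈ H.V, ∃ b ∈ H.V, a ≠ b ∧ H.degree a = 3 ∧ H.degree b = 3 ∧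
      ∀ v ∈ H.V, v ≠ a → v ≠ b → H.degree v = 2

/-- `G / e`: contract the non-loop edge `e` with endpoints `x` and `y`
(identifying `y` with `x` and deleting `e`). -/
noncomputable def contractEdge (G : Graph α β) (e : β) (x y : α) (he : e ∈ G.E)
    (hxy : G.ends e = s(x, y)) (hne : x ≠ y) : Graph α β where
  V := G.V \ {y}
  E := G.E \ {e}
  ends := fun f => (G.ends f).map (fun w => if w = y then x else w)
  finV := G.finV.diff
  finE := G.finE.diff
  ends_mem := by
    rintro f ⟨hf, -⟩ z hz
    try dsimp only at hz
    rw [Sym2.mem_map] at hz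
    obtain ⟨w, hw, rfl⟩ := hz
    by_cases hwy : w = y
    · rw [if_pos hwy]
      have hx : x ∈ G.ends e := by rw [hxy]; exact Sym2.mem_mk_left x y
      exact ⟨G.ends_mem he hx, by simp [hne]⟩
    · rw [if_neg hwy]
      exact ⟨G.ends_mem hf hw, by simp [hwy]⟩

/-- `G ∘ e`: for a loop-edge `e` at a vertex `v` which is the unique loop-edge at `v`,
delete `v` and `e`, and replace every other edge `f = vw` at `v` by a loop-edge at `w`. -/
noncomputable def circ (G : Graph α β) (e : β) (v : α)
    (hno : ∀ f ∈ G.E, G.ends f = Sym2.diag v → f = e) : Graph α β where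
  V := G.V \ {v}
  E := G.E \ {e}
  ends := fun f =>
    if h : f ∈ G.E ∧ f ≠ e ∧ v ∈ G.ends f then Sym2.diag (Sym2.Mem.other h.2.2)
    else G.ends f
  finV := G.finV.diff
  finE := G.finE.diff
  ends_mem := by
    rintro f ⟨hf, hfe⟩ z hz
    try dsimp only at hz
    have hfe' : f ≠ e := fun h' => hfe (by simp [h'])
    by_cases h : f ∈ G.E ∧ f ≠ e ∧ v ∈ G.ends f
    · rw [dif_pos h] at hz
      have hze : z = Sym2.Mem.other h.2.2 := by
        have h2 : z ∈ s(Sym2.Mem.other h.2.2, Sym2.Mem.other h.2.2) := hz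
        rw [Sym2.mem_iff] at h2
        tauto
      subst hze
      refine ⟨G.ends_mem hf (Sym2.other_mem h.2.2), ?_⟩
      simp only [mem_singleton_iff]
      intro hzv
      apply h.2.1
      apply hno f hf
      show G.ends f = s(v, v)
      rw [← Sym2.other_spec h.2.2, hzv]
    · rw [dif_neg h] at hz
      refine ⟨G.ends_mem hf hz, ?_⟩
      simp only [mem_singleton_iff]
      intro hzv
      subst hzv
      exact h ⟨hf, hfe', hz⟩

end Graph

/-! ### Matroid notions -/

variable {α : Type u} {β : Type v}

/-- The rank `r_M(X)` of a set `X` in a matroid `M`: the maximum size of an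
independent subset of `X`. -/
noncomputable def rank (M : Matroid β) (X : Set β) : ℕ :=
  (⨆ I ∈ {I : Set β | M.Indep I ∧ I ⊆ X}, I.encard).toNat

/-- `C` is a circuit of `M` : a minimal dependent set. -/
def IsCircuit (M : Matroid β) (C : Set β) : Prop :=
  M.Dep C ∧ ∀ D, D ⊂ C → M.Indep D

/-- `M \ D` : delete the set `D` from the matroid `M`. -/
def deleteM (M : Matroid β) (D : Set β) : Matroid β := M ↾ (M.E \ D)

/-- `M / C` : contract the set `C` in the matroid `M`. -/
def contractM (M : Matroid β) (C : Set β) : Matroid β := (M✶ ↾ (M✶.E \ C))✶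

/-- `G` is a weak framework for `M`: conditions (1)–(3). -/
def WeakFramework (G : Graph α β) (M : Matroid β) : Prop :=
  G.E = M.E ∧
  (∀ H : Graph α β, H.IsComponentOf G → rank M H.E ≤ H.V.ncard) ∧
  (∀ v ∈ G.V,
    M.closure (G.deleteVertex v).E ⊆ (G.deleteVertex v).E ∪ G.loopsAt v)

/-- `G` is a framework for `M`: conditions (1)–(4). -/
def Framework (G : Graph α β) (M : Matroid β) : Prop :=
  WeakFramework G M ∧
    ∀ C, IsCircuit M C → (G.restrictEdges C).AtMostTwoComponents

/-- `M` is the cycle matroid `M(G)` of `G` : the ground set of `M` is `E(G)`, and the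
circuits of `M` are exactly the edge sets of cycles of `G`. -/
def IsCycleMatroidOf (G : Graph α β) (M : Matroid β) : Prop :=
  M.E = G.E ∧ ∀ C, IsCircuit M C ↔ G.CycleSet C

/-- A matroid is graphic if it is the cycle matroid of some graph. -/
def Graphic (M : Matroid β) : Prop :=
  ∃ (γ : Type v) (G : Graph γ β), IsCycleMatroidOf G M

/-- A matroid is quasi-graphic if it has a framework. -/
def QuasiGraphic (M : Matroid β) : Prop :=
  ∃ (γ : Type v) (G : Graph γ β), Framework G M

/-- `M` is a lift of `N` if some single-element extension `M'` of `M` satisfies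
`M' \ e = M` and `M' / e = N`. -/
def IsLiftOf (M N : Matroid β) : Prop :=
  ∃ M' : Matroid (Option β), (none : Option β) ∈ M'.E ∧
    deleteM M' {none} = M.map some (Option.some_injective β).injOn ∧
    contractM M' {none} = N.map some (Option.some_injective β).injOn

/-- `M` is a lifted-graphic matroid: for some single-element extension `M'` of `M`,
`M' / e` is graphic. -/
def LiftedGraphic (M : Matroid β) : Prop :=
  ∃ M' : Matroid (Option β), (none : Option β) ∈ M'.E ∧
    deleteM M' {none} = M.map some (Option.some_injective β).injOn ∧
    Graphic (contractM M' {none})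

/-- `(M, V)` is a framed matroid: `V` is a basis of `M` and every element of `M` is
spanned by a subset of `V` with at most two elements. -/
def FramedMatroid {γ : Type u} (M : Matroid γ) (V : Set γ) : Prop :=
  M.IsBase V ∧ ∀ e ∈ M.E, ∃ S ⊆ V, S.ncard ≤ 2 ∧ e ∈ M.closure S

/-- `M` is a frame matroid: `M = M' \ V` for some framed matroid `(M', V)`. -/
def FrameMatroid (M : Matroid β) : Prop :=
  ∃ (γ : Type v) (M' : Matroid (β ⊕ γ)) (V : Set (β ⊕ γ)),
    FramedMatroid M' V ∧
      deleteM M' V = M.map Sum.inl Sum.inl_injective.injOn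

/-- `M` is `3`-connected: it has no `k`-separation for `k ≤ 2`. -/
def ThreeConnected (M : Matroid β) : Prop :=
  ∀ X ⊆ M.E, ∀ k : ℕ, k ≤ 2 → (k : ℕ∞) ≤ X.encard → (k : ℕ∞) ≤ (M.E \ X).encard →
    rank M M.E + k ≤ rank M X + rank M (M.E \ X)

/-- `M` is representable over some field. -/
def Representable (M : Matroid β) : Prop :=
  ∃ (F : Type v) (_ : Field F) (W : Type v) (_ : AddCommGroup W) (_ : Module F W)
    (φ : β → W), ∀ I ⊆ M.E, (M.Indep I ↔ LinearIndependent F (fun x : I => φ x))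

/-- A collection `B` of cycles of `G` satisfies the theta-property if there is no
theta-subgraph of `G` with exactly two of its three cycles in `B`. -/
def ThetaProperty (G : Graph α β) (B : Set (Set β)) : Prop :=
  ∀ H : Graph α β, H.IsSubgraph G → H.IsTheta →
    ∀ C1 C2 C3, H.CycleSet C1 → H.CycleSet C2 → H.CycleSet C3 →
      C1 ≠ C2 → C2 ≠ C3 → C1 ≠ C3 → C1 ∈ B → C2 ∈ B → C3 ∈ B

lemma rank_eq_toNat_eRk (M : Matroid β) (X : Set β) : rank M X = (M.eRk X).toNat := by
  refine congrArg ENat.toNat (le_antisymm ?_ ?_)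
  · exact iSup₂_le fun I hI => hI.1.encard_le_eRk_of_subset hI.2
  · obtain ⟨I, hI⟩ := M.exists_isBasis' X
    rw [hI.eRk_eq_encard]
    exact le_iSup₂_of_le I ⟨hI.indep, hI.subset⟩ le_rfl

namespace Graph

open Relation

variable {G : Graph α β} {W W' : Set α} {x y : α}

/-- The edge set `E(G[W])` of the subgraph induced on `W`. -/
def edgesWithin (G : Graph α β) (W : Set α) : Set β := {e ∈ G.E | ∀ x ∈ G.ends e, x ∈ W}

lemma edgesWithin_mono (h : W ⊆ W') : G.edgesWithin W ⊆ G.edgesWithin W' :=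
  fun _ he => ⟨he.1, fun x hx => h (he.2 x hx)⟩

@[simp]
lemma edgesWithin_empty : G.edgesWithin ∅ = ∅ :=
  eq_empty_of_forall_notMem fun e he => he.2 _ (Sym2.out_fst_mem (G.ends e))

lemma adj_symm (h : G.Adj x y) : G.Adj y x :=
  let ⟨e, he, hends⟩ := h
  ⟨e, he, hends.trans Sym2.eq_swap⟩

lemma reflTransGen_adj_symm (h : ReflTransGen G.Adj x y) : ReflTransGen G.Adj y x :=
  ReflTransGen.mono (fun _ _ => adj_symm) _ _ (ReflTransGen.swap _ _ h)

lemma reflTransGen_adj_of_mem_ends {e : β} (he : e ∈ G.E) (hx : x ∈ G.ends e)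
    (hy : y ∈ G.ends e) : ReflTransGen G.Adj x y := by
  obtain rfl | hxy := eq_or_ne x y
  · exact ReflTransGen.refl
  · exact ReflTransGen.single ⟨e, he, (Sym2.mem_and_mem_iff hxy).1 ⟨hx, hy⟩⟩

lemma exists_adj_mem_notMem_of_reflTransGen (h : ReflTransGen G.Adj x y) (hx : x ∈ W)
    (hy : y ∉ W) : ∃ a b, G.Adj a b ∧ a ∈ W ∧ b ∉ W ∧ ReflTransGen G.Adj x b := by
  induction h with
  | refl => exact absurd hx hy
  | @tail b c hxb hbc ih =>
    by_cases hb : b ∈ W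
    · exact ⟨b, c, hbc, hb, hy, hxb.tail hbc⟩
    · exact ih hb

lemma edgesWithin_componentOf (x : α) :
    G.edgesWithin (G.componentOf x).V = (G.componentOf x).E := by
  ext e
  exact ⟨fun ⟨he, h⟩ => ⟨he, fun y hy => (h y hy).2⟩,
    fun ⟨he, h⟩ => ⟨he, fun y hy => ⟨G.ends_mem he hy, h y hy⟩⟩⟩

lemma edgesWithin_subset_union_componentOf (W : Set α) (x : α) :
    G.edgesWithin W ⊆
      G.edgesWithin (W ∩ (G.componentOf x).V) ∪ G.edgesWithin (W \ (G.componentOf x).V) := by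
  rintro e ⟨he, hW⟩
  by_cases hC : ∃ y ∈ G.ends e, y ∈ (G.componentOf x).V
  · obtain ⟨y, hy, -, hxy⟩ := hC
    exact Or.inl ⟨he, fun z hz =>
      ⟨hW z hz, G.ends_mem he hz, hxy.trans (reflTransGen_adj_of_mem_ends he hy hz)⟩⟩
  · push Not at hC
    exact Or.inr ⟨he, fun z hz => ⟨hW z hz, hC z hz⟩⟩

end Graph

namespace WeakFramework

open Relation

variable {G : Graph α β} {M : Matroid β} {W : Set α} {x : α}

lemma eRk_edgesWithin_add_one_le (hG : WeakFramework G M) {a b : α} (hab : G.Adj a b)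
    (ha : a ∈ W) (hb : b ∉ W) :
    M.eRk (G.edgesWithin W) + 1 ≤ M.eRk (G.edgesWithin (insert b W)) := by
  obtain ⟨e, he, hends⟩ := hab
  have hbe : b ∈ G.ends e := hends ▸ Sym2.mem_mk_right a b
  have hsub : G.edgesWithin W ⊆ (G.deleteVertex b).E :=
    fun f hf => ⟨hf.1, fun z hz hzb => hb ((mem_singleton_iff.1 hzb) ▸ hf.2 z hz)⟩
  have hcl : e ∉ M.closure (G.edgesWithin W) := by
    intro hcl
    rcases hG.2.2 b (G.ends_mem he hbe) (M.closure_subset_closure hsub hcl) with hdel | hloop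
    · exact hdel.2 b hbe rfl
    · have hab : s(a, b) = s(b, b) := hends.symm.trans hloop.2
      exact hb ((Sym2.eq_iff.1 hab).elim (·.1) (·.1) ▸ ha)
  have heW : e ∈ G.edgesWithin (insert b W) := ⟨he, fun z hz => by
    rw [hends, Sym2.mem_iff] at hz
    rcases hz with rfl | rfl
    · exact mem_insert_of_mem _ ha
    · exact mem_insert _ _⟩
  calc M.eRk (G.edgesWithin W) + 1 = M.eRk (insert e (G.edgesWithin W)) :=
        (M.eRk_insert_eq_add_one ⟨hG.1 ▸ he, hcl⟩).symm
    _ ≤ M.eRk (G.edgesWithin (insert b W)) :=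
        M.eRk_mono (insert_subset heW (Graph.edgesWithin_mono (subset_insert _ _)))

lemma eRk_componentOf_le (hG : WeakFramework G M) (hx : x ∈ G.V) :
    M.eRk (G.componentOf x).E ≤ (G.componentOf x).V.encard := by
  have hrank := hG.2.1 _ ⟨x, hx, rfl⟩
  have hfin : M.eRk (G.componentOf x).E ≠ ⊤ :=
    ((M.eRk_le_encard _).trans_lt (G.componentOf x).finE.encard_lt_top).ne
  rw [rank_eq_toNat_eRk] at hrank
  rw [← ENat.natCast_toNat hfin, ← (G.componentOf x).finV.cast_ncard_eq]
  exact_mod_cast hrank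

lemma eRk_edgesWithin_le_of_subset_componentOf (hG : WeakFramework G M) (hx : x ∈ G.V)
    (hW : W ⊆ (G.componentOf x).V) : M.eRk (G.edgesWithin W) ≤ W.encard := by
  set C := G.componentOf x
  induction hn : (C.V \ W).ncard generalizing W with
  | zero =>
    obtain rfl : W = C.V := hW.antisymm (sdiff_eq_empty.1 ((ncard_eq_zero C.finV.sdiff).1 hn))
    rw [Graph.edgesWithin_componentOf]
    exact hG.eRk_componentOf_le hx
  | succ n ih =>
    obtain ⟨v, hvC, hvW⟩ : (C.V \ W).Nonempty := by
      rw [← ncard_pos C.finV.sdiff, hn]; exact n.succ_pos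
    obtain rfl | ⟨u, hu⟩ := W.eq_empty_or_nonempty
    · simp
    obtain ⟨a, b, hab, ha, hb, hub⟩ := Graph.exists_adj_mem_notMem_of_reflTransGen
      ((Graph.reflTransGen_adj_symm (hW hu).2).trans hvC.2) hu hvW
    have hbC : b ∈ C.V := by
      obtain ⟨e, he, hends⟩ := hab
      exact ⟨G.ends_mem he (hends ▸ Sym2.mem_mk_right a b), (hW hu).2.trans hub⟩
    have hn' : (C.V \ insert b W).ncard = n := by
      have := ncard_sdiff_singleton_add_one (s := C.V \ W) ⟨hbC, hb⟩ C.finV.sdiff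
      rw [← union_singleton, ← sdiff_sdiff]
      omega
    have hstep := (hG.eRk_edgesWithin_add_one_le hab ha hb).trans
      (ih (insert_subset hbC hW) hn')
    rwa [encard_insert_of_notMem hb, ENat.add_le_add_iff_right ENat.one_ne_top] at hstep

lemma eRk_edgesWithin_le (hG : WeakFramework G M) (hW : W ⊆ G.V) :
    M.eRk (G.edgesWithin W) ≤ W.encard := by
  induction hn : W.ncard using Nat.strong_induction_on generalizing W with
  | _ n ih =>
  obtain rfl | ⟨x, hx⟩ := W.eq_empty_or_nonempty
  · simp
  set C := G.componentOf x
  have hxC : x ∈ C.V := ⟨hW hx, ReflTransGen.refl⟩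
  have hlt : (W \ C.V).ncard < n :=
    hn ▸ ncard_lt_ncard (sdiff_subset.ssubset_of_ne fun h => (h ▸ hx).2 hxC)
      (G.finV.subset hW)
  calc M.eRk (G.edgesWithin W)
      ≤ M.eRk (G.edgesWithin (W ∩ C.V) ∪ G.edgesWithin (W \ C.V)) :=
        M.eRk_mono (Graph.edgesWithin_subset_union_componentOf W x)
    _ ≤ M.eRk (G.edgesWithin (W ∩ C.V)) + M.eRk (G.edgesWithin (W \ C.V)) :=
        M.eRk_union_le_eRk_add_eRk _ _
    _ ≤ (W ∩ C.V).encard + (W \ C.V).encard :=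
        add_le_add (hG.eRk_edgesWithin_le_of_subset_componentOf (hW hx) inter_subset_right)
          (ih _ hlt (sdiff_subset.trans hW) rfl)
    _ = W.encard := by rw [add_comm, encard_sdiff_add_encard_inter]

end WeakFramework

/-- Let `G` be a weak framework for a matroid `M`. If `H` is a subgraph
of `G` with `|E(H)| > |V(H)|`, then `E(H)` is a dependent set of `M`. -/
theorem statement9 {α : Type u} {β : Type v} (G H : Graph α β) (M : Matroid β)
    (h : WeakFramework G M) (hsub : H.IsSubgraph G)
    (hcard : H.V.ncard < H.E.ncard) :
    M.Dep H.E := by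
  have hHE : H.E ⊆ G.edgesWithin H.V :=
    fun e he => ⟨hsub.2.1 he, fun x hx => H.ends_mem he (hsub.2.2 ▸ hx)⟩
  refine ⟨fun hind => hcard.not_ge ?_, h.1 ▸ hsub.2.1⟩
  have hle : H.E.encard ≤ H.V.encard :=
    calc H.E.encard = M.eRk H.E := hind.eRk_eq_encard.symm
      _ ≤ M.eRk (G.edgesWithin H.V) := M.eRk_mono hHE
      _ ≤ H.V.encard := h.eRk_edgesWithin_le hsub.1
  rw [← H.finE.cast_ncard_eq, ← H.finV.cast_ncard_eq] at hle
  exact_mod_cast hle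

end QuasiGraphicPaper
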